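/- arXiv:math/0410568 — 2 statements merged into one kernel-verified Lean document; each statement's English description precedes it below -/
import Mathlib

section
/- Suppose f : ℝⁿ → ℝ is C¹, b ∈ ℝ, U ⊆ ℝⁿ, and there exist constants c > 0 and α ∈ (0,1) such that ‖∇f(y)‖ ≥ c·|f(y) − b|^α for all y ∈ U. Let γ : [t₀, t₁] → U be a solution of γ'(t) = −∇f(γ(t)) with f(γ(t)) > b for all t. Then (1/((1−α)c))·((f(γ(t₀)) − b)^{1−α} − (f(γ(t₁)) − b)^{1−α}) ≥ ∫_{t₀}^{t₁} ‖∇f(γ(t))‖ dt. -/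
open Set Filter Topology intervalIntegral

/-- Integrated Lojasiewicz estimate along a negative gradient trajectory. -/
theorem integrated_lojasiewicz (n : ℕ)
    (f : EuclideanSpace ℝ (Fin n) → ℝ) (hf : ContDiff ℝ 1 f)
    (b : ℝ) (U : Set (EuclideanSpace ℝ (Fin n)))
    (c α : ℝ) (hc : 0 < c) (hα0 : 0 < α) (hα1 : α < 1)
    (hloj : ∀ y ∈ U, ‖gradient f y‖ ≥ c * |f y - b| ^ α)
    (t₀ t₁ : ℝ) (ht : t₀ ≤ t₁) (γ : ℝ → EuclideanSpace ℝ (Fin n))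
    (hγ : ∀ t ∈ Set.Icc t₀ t₁, HasDerivAt γ (-(gradient f (γ t))) t)
    (hγU : ∀ t ∈ Set.Icc t₀ t₁, γ t ∈ U)
    (hγb : ∀ t ∈ Set.Icc t₀ t₁, f (γ t) > b) :
    (1 / ((1 - α) * c)) * ((f (γ t₀) - b) ^ (1 - α) - (f (γ t₁) - b) ^ (1 - α))
      ≥ ∫ t in t₀..t₁, ‖gradient f (γ t)‖ := by
  have h1α : (0:ℝ) < 1 - α := by linarith
  have hIcc : Set.uIcc t₀ t₁ = Set.Icc t₀ t₁ := Set.uIcc_of_le ht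
  have ht0 : t₀ ∈ Set.Icc t₀ t₁ := Set.left_mem_Icc.2 ht
  have ht1 : t₁ ∈ Set.Icc t₀ t₁ := Set.right_mem_Icc.2 ht
  have hγc : ContinuousOn γ (Set.Icc t₀ t₁) :=
    fun t h => ((hγ t h).continuousAt).continuousWithinAt
  have hgradc : Continuous (fun x => gradient f x) := by
    have h1 : Continuous (fderiv ℝ f) := hf.continuous_fderiv one_ne_zero
    exact ((InnerProductSpace.toDual ℝ _).symm.continuous).comp h1
  have hng : ContinuousOn (fun t => ‖gradient f (γ t)‖) (Set.Icc t₀ t₁) :=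
    (hgradc.comp_continuousOn hγc).norm
  set g : ℝ → ℝ := fun t => f (γ t) - b with hgdef
  have hgc : ContinuousOn g (Set.Icc t₀ t₁) :=
    ((hf.continuous.comp_continuousOn hγc).sub continuousOn_const)
  have hgpos : ∀ t ∈ Set.Icc t₀ t₁, 0 < g t := fun t h => sub_pos.2 (hγb t h)
  have hgderiv : ∀ t ∈ Set.Icc t₀ t₁,
      HasDerivAt g (-(‖gradient f (γ t)‖ ^ 2)) t := by
    intro t h
    have hd : DifferentiableAt ℝ f (γ t) := hf.differentiable one_ne_zero (γ t)
    have h1 := (hd.hasGradientAt.hasFDerivAt.comp_hasDerivAt t (hγ t h)).sub_const b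
    refine h1.congr_deriv ?_
    rw [InnerProductSpace.toDual_apply_apply, inner_neg_right, real_inner_self_eq_norm_sq]
  -- the comparison function and its derivative
  set D : ℝ → ℝ := fun t => -(‖gradient f (γ t)‖ ^ 2) * (1 - α) * g t ^ (-α) with hDdef
  have hφderiv : ∀ t ∈ Set.Icc t₀ t₁,
      HasDerivAt (fun s => g s ^ (1 - α)) (D t) t := by
    intro t h
    have := (hgderiv t h).rpow_const (p := 1 - α) (Or.inl (hgpos t h).ne')
    convert this using 1
    simp [hDdef]
  have hDc : ContinuousOn D (Set.Icc t₀ t₁) := by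
    refine (((hng.pow 2).neg.mul continuousOn_const).mul ?_)
    exact hgc.rpow_const fun t h => Or.inl (hgpos t h).ne'
  have hftc : ∫ t in t₀..t₁, D t = g t₁ ^ (1 - α) - g t₀ ^ (1 - α) := by
    apply intervalIntegral.integral_eq_sub_of_hasDerivAt
    · intro t h; exact hφderiv t (hIcc ▸ h)
    · exact (hDc.mono (by rw [hIcc])).intervalIntegrable
  -- pointwise comparison
  have hpt : ∀ t ∈ Set.Icc t₀ t₁,
      ‖gradient f (γ t)‖ ≤ (1 / ((1 - α) * c)) * (-(D t)) := by
    intro t h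
    have hA : (0:ℝ) < g t ^ α := Real.rpow_pos_of_pos (hgpos t h) α
    have hrn : g t ^ (-α) = (g t ^ α)⁻¹ := Real.rpow_neg (hgpos t h).le α
    have hl : ‖gradient f (γ t)‖ ≥ c * g t ^ α := by
      have := hloj (γ t) (hγU t h)
      rwa [abs_of_pos (hgpos t h)] at this
    have hN : (0:ℝ) ≤ ‖gradient f (γ t)‖ := norm_nonneg _
    have key : c * ‖gradient f (γ t)‖ * (g t ^ α) ≤ ‖gradient f (γ t)‖ ^ 2 := by
      nlinarith
    have : -(D t) = (1 - α) * (‖gradient f (γ t)‖ ^ 2 * (g t ^ α)⁻¹) := by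
      simp [hDdef, hrn]; ring
    rw [this]
    have h2 : c * ‖gradient f (γ t)‖ ≤ ‖gradient f (γ t)‖ ^ 2 * (g t ^ α)⁻¹ := by
      have h3 := mul_le_mul_of_nonneg_right key (le_of_lt (inv_pos.2 hA))
      rwa [mul_assoc, mul_inv_cancel₀ hA.ne', mul_one] at h3
    rw [one_div, ← div_eq_inv_mul, le_div_iff₀ (by positivity)]
    nlinarith [h2, h1α.le, hc.le]
  -- integrate the comparison
  have hint : ∫ t in t₀..t₁, ‖gradient f (γ t)‖
      ≤ ∫ t in t₀..t₁, (1 / ((1 - α) * c)) * (-(D t)) := by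
    apply intervalIntegral.integral_mono_on ht
    · exact (hng.mono (by rw [← hIcc])).intervalIntegrable
    · exact (((continuousOn_const.mul hDc.neg).mono (by rw [← hIcc])).intervalIntegrable)
    · exact hpt
  calc ∫ t in t₀..t₁, ‖gradient f (γ t)‖
      ≤ ∫ t in t₀..t₁, (1 / ((1 - α) * c)) * (-(D t)) := hint
    _ = (1 / ((1 - α) * c)) * (g t₀ ^ (1 - α) - g t₁ ^ (1 - α)) := by
        rw [intervalIntegral.integral_const_mul, intervalIntegral.integral_neg, hftc]; ring
    _ = (1 / ((1 - α) * c)) * ((f (γ t₀) - b) ^ (1 - α) - (f (γ t₁) - b) ^ (1 - α)) := rfl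
end

section
/- Let f : ℝⁿ → ℝ be C¹, b ∈ ℝ, α ∈ (0,1), and suppose γ solves γ' = −∇f with f(γ(t)) > b and ‖∇f(γ(t))‖ ≥ c·(f(γ(t)) − b)^α for all t ≥ 0, with c > 0. Then the function g(t) = (f(γ(t)) − b)^{1−α} satisfies g'(t) ≤ −(1−α)·c·‖∇f(γ(t))‖ for all t ≥ 0. -/
open Set Filter Topology

/-- The key differential inequality of Lojasiewicz's argument: along a negative
gradient trajectory satisfying the gradient inequality, `(f ∘ γ - b) ^ (1 - α)`
decreases at rate at least `(1 - α) * c * ‖∇f∘γ‖`. -/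
theorem lojasiewicz_differential_inequality (n : ℕ)
    (f : EuclideanSpace ℝ (Fin n) → ℝ) (hf : ContDiff ℝ 1 f)
    (b c α : ℝ) (hc : 0 < c) (hα0 : 0 < α) (hα1 : α < 1)
    (γ : ℝ → EuclideanSpace ℝ (Fin n))
    (hγ : ∀ t : ℝ, 0 ≤ t → HasDerivAt γ (-(gradient f (γ t))) t)
    (hgt : ∀ t : ℝ, 0 ≤ t → f (γ t) > b)
    (hloj : ∀ t : ℝ, 0 ≤ t → ‖gradient f (γ t)‖ ≥ c * (f (γ t) - b) ^ α) :
    ∀ t : ℝ, 0 ≤ t → ∃ d : ℝ,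
      HasDerivAt (fun s => (f (γ s) - b) ^ (1 - α)) d t ∧
      d ≤ -((1 - α) * c * ‖gradient f (γ t)‖) := by
  intro t ht
  set g := gradient f (γ t) with hg
  have hdf : DifferentiableAt ℝ f (γ t) := (hf.differentiable one_ne_zero) (γ t)
  have hgrad : HasGradientAt f g (γ t) := hdf.hasGradientAt
  have hF : HasFDerivAt f ((InnerProductSpace.toDual ℝ _) g) (γ t) :=
    hgrad.hasFDerivAt
  have hcomp : HasDerivAt (fun s => f (γ s)) (-(‖g‖ ^ 2)) t := by
    have h := hF.comp_hasDerivAt t (hγ t ht)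
    have hval : (InnerProductSpace.toDual ℝ _) g (-g) = -(‖g‖ ^ 2) := by
      rw [InnerProductSpace.toDual_apply_apply, inner_neg_right, real_inner_self_eq_norm_sq]
    rw [hval] at h
    exact h
  have hA : (0:ℝ) < f (γ t) - b := sub_pos.mpr (hgt t ht)
  have hsub : HasDerivAt (fun s => f (γ s) - b) (-(‖g‖ ^ 2)) t :=
    hcomp.sub_const b
  have hrpow : HasDerivAt (fun s => (f (γ s) - b) ^ (1 - α))
      (-(‖g‖ ^ 2) * (1 - α) * (f (γ t) - b) ^ (1 - α - 1)) t :=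
    hsub.rpow_const (p := 1 - α) (Or.inl (ne_of_gt hA))
  refine ⟨_, hrpow, ?_⟩
  have hGa : c * (f (γ t) - b) ^ α ≤ ‖g‖ := hloj t ht
  have hApow : (0:ℝ) < (f (γ t) - b) ^ α := Real.rpow_pos_of_pos hA α
  have hGpos : (0:ℝ) < ‖g‖ := lt_of_lt_of_le (by positivity) hGa
  have hkey : (f (γ t) - b) ^ (1 - α - 1) * ‖g‖ ^ 2 ≥ c * ‖g‖ := by
    have h1 : (f (γ t) - b) ^ (1 - α - 1) = ((f (γ t) - b) ^ α)⁻¹ := by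
      rw [show (1 - α - 1 : ℝ) = -α by ring, Real.rpow_neg hA.le]
    rw [h1]
    rw [ge_iff_le, ← sub_nonneg]
    have : ((f (γ t) - b) ^ α)⁻¹ * ‖g‖ ^ 2 - c * ‖g‖
        = (((f (γ t) - b) ^ α)⁻¹ * ‖g‖) * (‖g‖ - c * (f (γ t) - b) ^ α) := by
      field_simp
    rw [this]
    have h2 : (0:ℝ) ≤ ((f (γ t) - b) ^ α)⁻¹ * ‖g‖ := by positivity
    exact mul_nonneg h2 (by linarith)
  have h1α : (0:ℝ) < 1 - α := by linarith
  nlinarith [mul_le_mul_of_nonneg_left hkey h1α.le]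
end
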